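/- arXiv:2111.03175 — 2 statements merged into one kernel-verified Lean document; each statement's English description precedes it below -/
import Mathlib

section
/- On ℝ[X_1, …, X_d], the differential operators satisfy the identity r² ∇² = L² + ∂_r(∂_r + d − 2), where r²∇² denotes multiplication by r² = X_1² + … + X_d² composed with the Laplacian ∇² = Σ_i ∂_i², ∂_r = Σ_i X_i ∂_i, and L² = Σ_{a<b} (X_a ∂_b − X_b ∂_a)². -/
open MvPolynomial

lemma pd_comm {σ : Type*} [DecidableEq σ] (i j : σ) (f : MvPolynomial σ ℝ) :
    pderiv i (pderiv j f) = pderiv j (pderiv i f) := by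
  induction f using MvPolynomial.induction_on with
  | C a => simp [pderiv_C]
  | add p q hp hq => simp [map_add, hp, hq]
  | mul_X p k hp =>
    simp only [pderiv_mul, map_add, hp]
    rcases eq_or_ne k i with rfl | hik <;> rcases eq_or_ne k j with rfl | hjk <;>
      simp [pderiv_X_self, pderiv_X_of_ne, pderiv_one, *]


/-- The Laplacian `∇² = ∑ i ∂ᵢ²` on polynomials. -/
noncomputable def mvLap {d : ℕ} (f : MvPolynomial (Fin d) ℝ) : MvPolynomial (Fin d) ℝ :=
  ∑ i : Fin d, pderiv i (pderiv i f)

/-- The radial (Euler) operator `∂_r = ∑ i Xᵢ ∂ᵢ`. -/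
noncomputable def mvDr {d : ℕ} (f : MvPolynomial (Fin d) ℝ) : MvPolynomial (Fin d) ℝ :=
  ∑ i : Fin d, X i * pderiv i f

/-- The rotation generator `L_{ab} = X_a ∂_b − X_b ∂_a`. -/
noncomputable def mvL {d : ℕ} (a b : Fin d) (f : MvPolynomial (Fin d) ℝ) :
    MvPolynomial (Fin d) ℝ :=
  X a * pderiv b f - X b * pderiv a f

/-- The Laplace–Beltrami operator `L² = ∑_{a<b} L_{ab}²`. -/
noncomputable def mvL2 {d : ℕ} (f : MvPolynomial (Fin d) ℝ) : MvPolynomial (Fin d) ℝ :=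
  ∑ a : Fin d, ∑ b : Fin d, if a < b then mvL a b (mvL a b f) else 0

/-- `r² = X₁² + … + X_d²`. -/
noncomputable def rsq (d : ℕ) : MvPolynomial (Fin d) ℝ := ∑ i : Fin d, X i ^ 2

lemma mvL_sq {d : ℕ} (a b : Fin d) (f : MvPolynomial (Fin d) ℝ) :
    mvL a b (mvL a b f) =
      X a ^ 2 * pderiv b (pderiv b f) + X b ^ 2 * pderiv a (pderiv a f)
      - 2 * (X a * X b * pderiv a (pderiv b f))
      - X a * pderiv a f - X b * pderiv b f
      + (if a = b then 2 * (X a * pderiv a f) else 0) := by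
  unfold mvL
  simp only [map_sub, pderiv_mul]
  rcases eq_or_ne a b with rfl | hab
  · simp only [if_pos rfl, pderiv_X_self]
    ring_nf
    simp
  · rw [pd_comm b a f]
    simp only [if_neg hab, pderiv_X_of_ne hab, pderiv_X_of_ne hab.symm, pderiv_X_self]
    ring

lemma mvL_sq_symm {d : ℕ} (a b : Fin d) (f : MvPolynomial (Fin d) ℝ) :
    mvL b a (mvL b a f) = mvL a b (mvL a b f) := by
  rw [mvL_sq, mvL_sq, pd_comm b a f]
  rcases eq_or_ne a b with rfl | hab
  · ring
  · simp only [if_neg hab, if_neg (Ne.symm hab)]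
    ring

lemma mvL_sq_diag {d : ℕ} (a : Fin d) (f : MvPolynomial (Fin d) ℝ) :
    mvL a a (mvL a a f) = 0 := by
  simp [mvL]

lemma double_L2 {d : ℕ} (f : MvPolynomial (Fin d) ℝ) :
    ∑ a : Fin d, ∑ b : Fin d, mvL a b (mvL a b f) = mvL2 f + mvL2 f := by
  have step : ∀ a b : Fin d, mvL a b (mvL a b f) =
      (if a < b then mvL a b (mvL a b f) else 0)
      + (if b < a then mvL a b (mvL a b f) else 0) := by
    intro a b
    rcases lt_trichotomy a b with h | rfl | h
    · simp [h, not_lt_of_gt h]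
    · simp [mvL_sq_diag]
    · simp [h, not_lt_of_gt h]
  calc ∑ a : Fin d, ∑ b : Fin d, mvL a b (mvL a b f)
      = ∑ a : Fin d, ∑ b : Fin d, ((if a < b then mvL a b (mvL a b f) else 0)
        + (if b < a then mvL a b (mvL a b f) else 0)) := by
        exact Finset.sum_congr rfl fun a _ => Finset.sum_congr rfl fun b _ => step a b
    _ = mvL2 f + (∑ a : Fin d, ∑ b : Fin d, if b < a then mvL a b (mvL a b f) else 0) := by
        simp only [Finset.sum_add_distrib]; rfl
    _ = mvL2 f + mvL2 f := by
        congr 1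
        rw [Finset.sum_comm]
        refine Finset.sum_congr rfl fun a _ => Finset.sum_congr rfl fun b _ => ?_
        rw [mvL_sq_symm]

/-- `r² ∇² = L² + ∂_r (∂_r + d − 2)` as operators on `ℝ[X₁, …, X_d]`. -/
theorem operator_identity (d : ℕ) (f : MvPolynomial (Fin d) ℝ) :
    rsq d * mvLap f = mvL2 f + mvDr (mvDr f) + ((d : ℝ) - 2) • mvDr f := by
  classical
  -- expansions of the pieces as double sums
  have hA : ∑ a : Fin d, ∑ b : Fin d, X a ^ 2 * pderiv b (pderiv b f) = rsq d * mvLap f := by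
    rw [rsq, mvLap, Finset.sum_mul_sum]
  have hA' : ∑ a : Fin d, ∑ b : Fin d, X (σ := Fin d) (R := ℝ) b ^ 2 * pderiv a (pderiv a f)
      = rsq d * mvLap f := by
    rw [Finset.sum_comm]; exact hA
  have hB : ∑ a : Fin d, ∑ b : Fin d,
      X a * (pderiv a (X b) * pderiv b f + X b * pderiv a (pderiv b f)) = mvDr (mvDr f) := by
    rw [mvDr]
    refine Finset.sum_congr rfl fun a _ => ?_
    rw [mvDr, map_sum, Finset.mul_sum]
    exact Finset.sum_congr rfl fun b _ => by rw [pderiv_mul]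
  have hB' : ∑ a : Fin d, ∑ b : Fin d,
      X b * (pderiv b (X a) * pderiv a f + X a * pderiv b (pderiv a f)) = mvDr (mvDr f) := by
    rw [Finset.sum_comm]; exact hB
  have hC : ∑ a : Fin d, ∑ b : Fin d, X (σ := Fin d) (R := ℝ) b * pderiv b f
      = (d : ℕ) • mvDr f := by
    rw [Finset.sum_const, Finset.card_univ, Fintype.card_fin, mvDr]
  have hC' : ∑ a : Fin d, ∑ b : Fin d, X (σ := Fin d) (R := ℝ) a * pderiv a f
      = (d : ℕ) • mvDr f := by
    rw [Finset.sum_comm]; exact hC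
  have hD : ∑ a : Fin d, ∑ b : Fin d,
      (if a = b then (4 : MvPolynomial (Fin d) ℝ) * (X a * pderiv a f) else 0)
      = 4 * mvDr f := by
    rw [mvDr, Finset.mul_sum]
    refine Finset.sum_congr rfl fun a _ => ?_
    simp [Finset.sum_ite_eq]
  -- the master double-sum identity
  have big : ∑ a : Fin d, ∑ b : Fin d, mvL a b (mvL a b f)
      = ∑ a : Fin d, ∑ b : Fin d,
        ((X a ^ 2 * pderiv b (pderiv b f) + X b ^ 2 * pderiv a (pderiv a f))
        - (X a * (pderiv a (X b) * pderiv b f + X b * pderiv a (pderiv b f))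
            + X b * (pderiv b (X a) * pderiv a f + X a * pderiv b (pderiv a f)))
        - (X b * pderiv b f + X a * pderiv a f
            - (if a = b then (4 : MvPolynomial (Fin d) ℝ) * (X a * pderiv a f) else 0))) := by
    refine Finset.sum_congr rfl fun a _ => Finset.sum_congr rfl fun b _ => ?_
    rw [mvL_sq, pd_comm b a f]
    rcases eq_or_ne a b with rfl | hab
    · simp only [if_pos rfl, pderiv_X_self]
      ring_nf
      simp
    · simp only [if_neg hab, pderiv_X_of_ne hab, pderiv_X_of_ne hab.symm]
      ring
  rw [double_L2] at big
  simp only [Finset.sum_sub_distrib, Finset.sum_add_distrib, hA, hA', hB, hB', hC, hC', hD]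
    at big
  -- now finish by linear algebra over the ring
  have hsmul : ((d : ℝ) - 2) • mvDr f = (d : ℕ) • mvDr f - 2 * mvDr f := by
    rw [smul_eq_C_mul, nsmul_eq_mul, map_sub]
    have hc : (C ((d : ℕ) : ℝ) : MvPolynomial (Fin d) ℝ) = ((d : ℕ) : MvPolynomial (Fin d) ℝ) := by
      simp
    have hc2 : (C (2 : ℝ) : MvPolynomial (Fin d) ℝ) = 2 := by
      simp [map_ofNat]
    rw [hc, hc2]
    ring
  rw [hsmul]
  have h2 : (2 : MvPolynomial (Fin d) ℝ) ≠ 0 := two_ne_zero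
  apply mul_left_cancel₀ h2
  linear_combination -big
end

section
/- Let d ≥ 2 and let φ be a polynomial with Gegenbauer expansion φ = Σ_{l=0}^k φ̂_l P_l. Then Σ_{l=0}^k φ̂_l² l(l+d−2) = (Γ(d/2)/Γ((d−1)/2)) √(d/π) ∫_{−√d}^{√d} φ'(t)² (1 − t²/d)^{(d−1)/2} dt ≤ 2√(d(d−1)) · E[φ'(Z)² | Z ~ N(0,1)]. -/
open MeasureTheory

noncomputable section

/-- `đ_l`, the dimension of the space of degree-`l` harmonic homogeneous polynomials in
`d` variables. -/
def harmDim (d l : ℕ) : ℕ := (d + l - 1).choose (d - 1) - (d + l - 3).choose (d - 1)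

/-- The density `ξ` of a single coordinate of a uniform point of `√d S^{d−1}`. -/
def xiDensity (d : ℕ) (t : ℝ) : ℝ :=
  Real.Gamma ((d : ℝ) / 2) / (Real.Gamma (((d : ℝ) - 1) / 2) * Real.sqrt (Real.pi * d)) *
    (1 - t ^ 2 / d) ^ (((d : ℝ) - 3) / 2)

/-- `P` is the family of Gegenbauer polynomials for dimension `d`: `P l` has degree `l`,
the family is orthonormal with respect to `ξ` on `[−√d, √d]`, and `P l (√d) = √đ_l`. -/
def IsGegenbauer (d : ℕ) (P : ℕ → Polynomial ℝ) : Prop :=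
  (∀ l, (P l).natDegree = l) ∧
  (∀ l l', (∫ t in -Real.sqrt d..Real.sqrt d, (P l).eval t * (P l').eval t * xiDensity d t)
    = if l = l' then 1 else 0) ∧
  (∀ l, (P l).eval (Real.sqrt d) = Real.sqrt (harmDim d l))

/-!
The operator `L p = (d - t²) p'' - (d - 1) t p'` is in Sturm–Liouville form for the density `ξ`:
`(L p) ξ = (κ (1 - t²/d)^{(d-1)/2} p')'` with `κ = Γ(d/2)/Γ((d-1)/2) √(d/π)`, and the bracket
vanishes at `±√d`. Integrating by parts, `⟨L p, q⟩_ξ = -κ ∫ p' q' (1 - t²/d)^{(d-1)/2}`, which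
is symmetric in `p` and `q`. Since `L` maps polynomials of degree `≤ l` to themselves and
multiplies the coefficient of `t^l` by `-l(l+d-2)`, self-adjointness and orthonormality force
`L P_l = -l(l+d-2) P_l`; evaluating `⟨L φ, φ⟩_ξ` in both ways gives the identity.

For the inequality, log-convexity of `Γ` gives `κ ≤ √(d(d-1)/(2π))`, and `1 - u ≤ e^{-u}` together
with `t² ≤ d` gives `(1 - t²/d)^{(d-1)/2} ≤ e^{1/2} e^{-t²/2}`, where `e^{1/2} ≤ 2`.
-/

open Polynomial Real Set Finset ProbabilityTheory

namespace Polynomial.Sequence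

variable {K : Type*} [Field K] (S : Sequence K)

theorem exists_sum_smul_eq_of_degree_lt {q : K[X]} {m : ℕ} (hq : q.degree < m) :
    ∃ c : ℕ → K, ∑ i ∈ range m, c i • S i = q := by
  refine (Submodule.mem_span_image_finset_iff_exists_fun' K).mp ?_
  rw [coe_range, S.span_degreeLT fun i _ => (leadingCoeff_ne_zero.mpr (S.ne_zero i)).isUnit]
  exact mem_degreeLT.mpr hq

variable {S} {B : LinearMap.BilinForm K K[X]}

theorem bilin_sum_smul_left (hB : ∀ i j, B (S i) (S j) = if i = j then 1 else 0)
    (c : ℕ → K) {m i : ℕ} (hi : i < m) :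
    B (∑ j ∈ range m, c j • S j) (S i) = c i := by
  simp [hB, hi]

theorem bilin_sum_smul_right (hB : ∀ i j, B (S i) (S j) = if i = j then 1 else 0)
    (c : ℕ → K) {m i : ℕ} (hi : i < m) :
    B (S i) (∑ j ∈ range m, c j • S j) = c i := by
  simp [hB, hi]

theorem eq_zero_of_bilin_eq_zero (hB : ∀ i j, B (S i) (S j) = if i = j then 1 else 0)
    {q : K[X]} {m : ℕ} (hq : q.degree < m)
    (h : ∀ i < m, B q (S i) = 0) : q = 0 := by
  obtain ⟨c, rfl⟩ := S.exists_sum_smul_eq_of_degree_lt hq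
  refine sum_eq_zero fun i hi => ?_
  rw [← bilin_sum_smul_left hB c (mem_range.mp hi), h i (mem_range.mp hi), zero_smul]

theorem apply_eq_smul_of_isAdjointPair (hB : ∀ i j, B (S i) (S j) = if i = j then 1 else 0)
    {T : K[X] →ₗ[K] K[X]} (hT : B.IsAdjointPair B T T)
    {μ : ℕ → K} (hμ : ∀ l, (T (S l) - μ l • S l).degree < l) (l : ℕ) :
    T (S l) = μ l • S l := by
  induction l using Nat.strong_induction_on with
  | _ l ih =>
    refine sub_eq_zero.mp (eq_zero_of_bilin_eq_zero hB (hμ l) fun i hi => ?_)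
    rw [map_sub, LinearMap.sub_apply, hT, ih i hi]
    simp [hB, hi.ne']

theorem bilin_apply_sum_smul (hB : ∀ i j, B (S i) (S j) = if i = j then 1 else 0)
    {T : K[X] →ₗ[K] K[X]} {μ : ℕ → K} (hT : ∀ l, T (S l) = μ l • S l)
    (c : ℕ → K) (m : ℕ) :
    B (T (∑ l ∈ range m, c l • S l)) (∑ l ∈ range m, c l • S l)
      = ∑ l ∈ range m, μ l * c l ^ 2 := by
  have hTsum : T (∑ l ∈ range m, c l • S l) = ∑ l ∈ range m, (μ l * c l) • S l := by
    simp only [map_sum, map_smul, hT, smul_smul, mul_comm]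
  rw [hTsum, LinearMap.BilinForm.sum_left]
  refine sum_congr rfl fun l hl => ?_
  rw [LinearMap.BilinForm.smul_left, bilin_sum_smul_right hB c (mem_range.mp hl)]
  ring

end Polynomial.Sequence

namespace Polynomial

variable {ρ : ℝ → ℝ} {a b : ℝ}

theorem intervalIntegrable_eval_mul_eval_mul (hρ : IntervalIntegrable ρ volume a b)
    (p q : ℝ[X]) :
    IntervalIntegrable (fun t => p.eval t * q.eval t * ρ t) volume a b :=
  hρ.continuousOn_mul (p.continuous.mul q.continuous).continuousOn

def weightedInner (ρ : ℝ → ℝ) (a b : ℝ) (hρ : IntervalIntegrable ρ volume a b) :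
    LinearMap.BilinForm ℝ ℝ[X] :=
  LinearMap.mk₂ ℝ (fun p q => ∫ t in a..b, p.eval t * q.eval t * ρ t)
    (fun p p' q => by
      simp only [eval_add, add_mul]
      exact intervalIntegral.integral_add (intervalIntegrable_eval_mul_eval_mul hρ p q)
        (intervalIntegrable_eval_mul_eval_mul hρ p' q))
    (fun c p q => by
      simp only [eval_smul, smul_eq_mul, ← intervalIntegral.integral_const_mul, mul_assoc])
    (fun p q q' => by
      simp only [eval_add, mul_add, add_mul]
      exact intervalIntegral.integral_add (intervalIntegrable_eval_mul_eval_mul hρ p q)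
        (intervalIntegrable_eval_mul_eval_mul hρ p q'))
    (fun c p q => by
      simp only [eval_smul, smul_eq_mul, ← intervalIntegral.integral_const_mul]
      congr 1 with t
      ring)

theorem weightedInner_apply (hρ : IntervalIntegrable ρ volume a b) (p q : ℝ[X]) :
    weightedInner ρ a b hρ p q = ∫ t in a..b, p.eval t * q.eval t * ρ t :=
  rfl

end Polynomial

theorem Real.Gamma_add_half_le {x : ℝ} (hx : 0 < x) : Gamma (x + 1 / 2) ≤ √x * Gamma x := by
  have h := Gamma_mul_add_mul_le_rpow_Gamma_mul_rpow_Gamma hx (by linarith : 0 < x + 1)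
    (by norm_num : (0 : ℝ) < 1 / 2) (by norm_num : (0 : ℝ) < 1 / 2) (by norm_num)
  rw [Gamma_add_one hx.ne', mul_rpow hx.le (Gamma_pos_of_pos hx).le, ← sqrt_eq_rpow,
    ← sqrt_eq_rpow] at h
  calc Gamma (x + 1 / 2) = Gamma (1 / 2 * x + 1 / 2 * (x + 1)) := by ring_nf
    _ ≤ √(Gamma x) * (√x * √(Gamma x)) := h
    _ = √x * Gamma x := by rw [mul_left_comm, mul_self_sqrt (Gamma_pos_of_pos hx).le]

theorem Polynomial.integrable_eval_gaussianReal (p : ℝ[X]) (μ : ℝ) (v : NNReal) :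
    Integrable (fun x => p.eval x) (gaussianReal μ v) := by
  have hpow (n : ℕ) : Integrable (fun x : ℝ => x ^ n) (gaussianReal μ v) :=
    integrable_pow_of_mem_interior_integrableExpSet (by simp) n
  simp_rw [eval_eq_sum_range]
  exact integrable_finsetSum _ fun n _ => (hpow n).const_mul _

theorem ProbabilityTheory.continuous_gaussianPDFReal (μ : ℝ) (v : NNReal) :
    Continuous (gaussianPDFReal μ v) := by
  rw [gaussianPDFReal_def]
  fun_prop

theorem intervalIntegral_mul_le_integral_gaussianReal {f g : ℝ → ℝ} {a b K : ℝ} (hab : a ≤ b)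
    (hK : 0 ≤ K) (hf : Continuous f) (hf0 : ∀ t, 0 ≤ f t) (hfγ : Integrable f (gaussianReal 0 1))
    (hg : Continuous g) (hgK : ∀ t ∈ Icc a b, g t ≤ K * gaussianPDFReal 0 1 t) :
    ∫ t in a..b, f t * g t ≤ K * ∫ t, f t ∂gaussianReal 0 1 := by
  have hmono : ∫ t in a..b, f t * g t ≤ ∫ t in a..b, K * (gaussianPDFReal 0 1 t • f t) :=
    intervalIntegral.integral_mono_on hab ((hf.mul hg).intervalIntegrable _ _)
      ((continuous_const.mul ((continuous_gaussianPDFReal 0 1).smul hf)).intervalIntegrable _ _)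
      fun t ht => by rw [smul_eq_mul]; nlinarith [hgK t ht, hf0 t]
  have hrestrict : ∫ t in a..b, gaussianPDFReal 0 1 t • f t
      = ∫ t, (Ioc a b).indicator f t ∂gaussianReal 0 1 := by
    rw [integral_gaussianReal_eq_integral_smul one_ne_zero, intervalIntegral.integral_of_le hab,
      ← integral_indicator measurableSet_Ioc]
    congr 1 with t
    exact indicator_mul_right _ _ _
  calc ∫ t in a..b, f t * g t ≤ ∫ t in a..b, K * (gaussianPDFReal 0 1 t • f t) := hmono
    _ = K * ∫ t, (Ioc a b).indicator f t ∂gaussianReal 0 1 := by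
      rw [intervalIntegral.integral_const_mul, hrestrict]
    _ ≤ K * ∫ t, f t ∂gaussianReal 0 1 :=
      mul_le_mul_of_nonneg_left (integral_mono (hfγ.indicator measurableSet_Ioc) hfγ
        (indicator_le_self' fun t _ => hf0 t)) hK

namespace Gegenbauer

def diffOp (d : ℕ) : ℝ[X] →ₗ[ℝ] ℝ[X] :=
  LinearMap.mulLeft ℝ (C (d : ℝ) - X ^ 2) ∘ₗ derivative ∘ₗ derivative
    - LinearMap.mulLeft ℝ (C ((d : ℝ) - 1) * X) ∘ₗ derivative

theorem diffOp_apply (d : ℕ) (q : ℝ[X]) :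
    diffOp d q
      = (C (d : ℝ) - X ^ 2) * derivative (derivative q) - C ((d : ℝ) - 1) * X * derivative q :=
  rfl

theorem eval_diffOp (d : ℕ) (q : ℝ[X]) (t : ℝ) :
    (diffOp d q).eval t
      = ((d : ℝ) - t ^ 2) * (derivative (derivative q)).eval t
        - ((d : ℝ) - 1) * t * (derivative q).eval t := by
  simp [diffOp_apply]

theorem coeff_diffOp (d : ℕ) (q : ℝ[X]) (j : ℕ) :
    (diffOp d q).coeff j
      = d * (j + 1) * (j + 2) * q.coeff (j + 2) - j * (j + d - 2) * q.coeff j := by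
  have hder (r : ℝ[X]) (n : ℕ) : (derivative r).coeff n = r.coeff (n + 1) * (n + 1) := by
    simpa using r.coeff_derivative n
  rcases j with _ | _ | j
  · simp [diffOp_apply, hder]; ring
  all_goals
    simp only [diffOp_apply, coeff_sub, sub_mul, coeff_C_mul, mul_assoc, coeff_X_mul,
      coeff_X_pow_mul', hder]
    norm_num [add_assoc]
    ring

theorem degree_diffOp_sub_smul_lt (d : ℕ) {q : ℝ[X]} {l : ℕ} (hq : q.natDegree ≤ l) :
    (diffOp d q - (-(l * (l + d - 2) : ℝ)) • q).degree < l := by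
  refine degree_lt_iff_coeff_zero _ _ |>.mpr fun j hj => ?_
  have hj : l ≤ j := by exact_mod_cast hj
  rw [coeff_sub, coeff_smul, coeff_diffOp, smul_eq_mul,
    coeff_eq_zero_of_natDegree_lt (by omega : q.natDegree < j + 2)]
  rcases hj.eq_or_lt with rfl | hlt
  · ring
  · rw [coeff_eq_zero_of_natDegree_lt (hq.trans_lt hlt)]
    ring

def const (d : ℕ) : ℝ :=
  Gamma ((d : ℝ) / 2) / Gamma (((d : ℝ) - 1) / 2) * √((d : ℝ) / π)

def energyWeight (d : ℕ) (t : ℝ) : ℝ := (1 - t ^ 2 / d) ^ (((d : ℝ) - 1) / 2)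

variable {d : ℕ} {t : ℝ}

theorem xiDensity_eq_const_div_mul (hd : 0 < d) (t : ℝ) :
    xiDensity d t = const d / d * (1 - t ^ 2 / d) ^ (((d : ℝ) - 3) / 2) := by
  have hd' : (0 : ℝ) < d := by exact_mod_cast hd
  have hsd : √(d : ℝ) ≠ 0 := (sqrt_pos.mpr hd').ne'
  have hsπ : √π ≠ 0 := (sqrt_pos.mpr pi_pos).ne'
  rw [xiDensity, const, sqrt_mul pi_pos.le, sqrt_div hd'.le]
  congr 1
  field_simp
  rw [sq_sqrt hd'.le]

theorem one_sub_sq_div_nonneg (ht : t ∈ Icc (-√(d : ℝ)) √(d : ℝ)) : 0 ≤ 1 - t ^ 2 / d := by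
  rcases (Nat.cast_nonneg d : (0 : ℝ) ≤ d).eq_or_lt with hd | hd
  · simp [← hd]
  rw [sub_nonneg, div_le_one hd, ← sq_sqrt hd.le]
  exact sq_le_sq' ht.1 ht.2

theorem one_sub_sq_div_pos (ht : t ∈ Ioo (-√(d : ℝ)) √(d : ℝ)) : 0 < 1 - t ^ 2 / d := by
  have hd : (0 : ℝ) < d := sqrt_pos.mp (by linarith [ht.1, ht.2])
  rw [sub_pos, div_lt_one hd, ← sq_sqrt hd.le]
  exact sq_lt_sq' ht.1 ht.2

theorem continuous_energyWeight (hd : 1 ≤ d) : Continuous (energyWeight d) := by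
  have : (1 : ℝ) ≤ d := by exact_mod_cast hd
  exact (by fun_prop : Continuous fun t : ℝ => 1 - t ^ 2 / d).rpow_const
    fun _ => Or.inr (by linarith)

theorem energyWeight_eq_zero (hd : 2 ≤ d) (ht : t ^ 2 = d) : energyWeight d t = 0 := by
  have : (2 : ℝ) ≤ d := by exact_mod_cast hd
  rw [energyWeight, ht, div_self (by positivity), sub_self, zero_rpow (by linarith)]

theorem const_mul_energyWeight (hd : 0 < d) (ht : 0 < 1 - t ^ 2 / d) :
    const d * energyWeight d t = (d - t ^ 2) * xiDensity d t := by
  have hd' : (0 : ℝ) < d := by exact_mod_cast hd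
  rw [xiDensity_eq_const_div_mul hd, energyWeight,
    show ((d : ℝ) - 1) / 2 = ((d : ℝ) - 3) / 2 + 1 by ring, rpow_add_one ht.ne']
  field_simp

theorem hasDerivAt_const_mul_energyWeight (hd : 0 < d) (ht : 0 < 1 - t ^ 2 / d) :
    HasDerivAt (fun t => const d * energyWeight d t) (-((d - 1) * t) * xiDensity d t) t := by
  have hd' : (0 : ℝ) < d := by exact_mod_cast hd
  have hbase : HasDerivAt (fun t : ℝ => 1 - t ^ 2 / d) (-(2 * t / d)) t := by
    simpa using ((hasDerivAt_pow 2 t).div_const (d : ℝ)).const_sub 1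
  refine ((hbase.rpow_const (p := ((d : ℝ) - 1) / 2) (Or.inl ht.ne')).const_mul
    (const d)).congr_deriv ?_
  rw [xiDensity_eq_const_div_mul hd, show ((d : ℝ) - 1) / 2 - 1 = ((d : ℝ) - 3) / 2 by ring]
  field_simp

theorem integral_diffOp_mul_xiDensity (hd : 2 ≤ d)
    (hξ : IntervalIntegrable (xiDensity d) volume (-√(d : ℝ)) √(d : ℝ)) (p q : ℝ[X]) :
    ∫ t in -√(d : ℝ)..√(d : ℝ), (diffOp d p).eval t * q.eval t * xiDensity d t
      = -const d * ∫ t in -√(d : ℝ)..√(d : ℝ),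
          (derivative p).eval t * (derivative q).eval t * energyWeight d t := by
  set F := fun t => (derivative p).eval t * q.eval t * (const d * energyWeight d t)
  have hderiv : ∀ t ∈ Ioo (-√(d : ℝ)) √(d : ℝ), HasDerivAt F
      ((diffOp d p).eval t * q.eval t * xiDensity d t
        + const d * ((derivative p).eval t * (derivative q).eval t * energyWeight d t)) t := by
    intro t ht
    have hpos := one_sub_sq_div_pos ht
    refine (((derivative p).hasDerivAt t).mul (q.hasDerivAt t)).mul
      (hasDerivAt_const_mul_energyWeight (by omega) hpos) |>.congr_deriv ?_
    simp only [Pi.mul_apply, eval_diffOp]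
    linear_combination (derivative (derivative p)).eval t * q.eval t
      * const_mul_energyWeight (by omega) hpos
  have hint₁ := intervalIntegrable_eval_mul_eval_mul hξ (diffOp d p) q
  have hW := continuous_energyWeight (d := d) (by omega)
  have hint₂ : IntervalIntegrable
      (fun t => (derivative p).eval t * (derivative q).eval t * energyWeight d t)
      volume (-√(d : ℝ)) √(d : ℝ) :=
    (by fun_prop : Continuous _).intervalIntegrable _ _
  have hFTC := intervalIntegral.integral_eq_sub_of_hasDerivAt_of_le
    (neg_le_self (sqrt_nonneg _)) (by fun_prop : Continuous F).continuousOn hderiv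
    (hint₁.add (hint₂.const_mul _))
  have hsq : √(d : ℝ) ^ 2 = d := sq_sqrt (Nat.cast_nonneg d)
  rw [intervalIntegral.integral_add hint₁ (hint₂.const_mul _),
    intervalIntegral.integral_const_mul] at hFTC
  simp only [F, energyWeight_eq_zero hd hsq, energyWeight_eq_zero hd ((neg_sq _).trans hsq),
    mul_zero, sub_zero] at hFTC
  linarith

theorem isAdjointPair_diffOp (hd : 2 ≤ d)
    (hξ : IntervalIntegrable (xiDensity d) volume (-√(d : ℝ)) √(d : ℝ)) :
    (weightedInner (xiDensity d) _ _ hξ).IsAdjointPair (weightedInner (xiDensity d) _ _ hξ)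
      (diffOp d) (diffOp d) := by
  intro p q
  calc weightedInner (xiDensity d) _ _ hξ (diffOp d p) q
      = -const d * ∫ t in -√(d : ℝ)..√(d : ℝ),
          (derivative q).eval t * (derivative p).eval t * energyWeight d t := by
        rw [weightedInner_apply, integral_diffOp_mul_xiDensity hd hξ]
        simp only [mul_comm (eval _ (derivative p))]
    _ = weightedInner (xiDensity d) _ _ hξ p (diffOp d q) := by
        rw [weightedInner_apply, ← integral_diffOp_mul_xiDensity hd hξ]
        simp only [mul_comm (eval _ p)]

theorem const_le_sqrt (hd : 2 ≤ d) : const d ≤ √((d : ℝ) * (d - 1) / (2 * π)) := by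
  have hd' : (2 : ℝ) ≤ d := by exact_mod_cast hd
  have hx : 0 < ((d : ℝ) - 1) / 2 := by linarith
  have hΓ := Gamma_add_half_le hx
  rw [show ((d : ℝ) - 1) / 2 + 1 / 2 = d / 2 by ring, ← div_le_iff₀ (Gamma_pos_of_pos hx)] at hΓ
  calc const d ≤ √(((d : ℝ) - 1) / 2) * √((d : ℝ) / π) := by
        unfold const; gcongr
    _ = √((d : ℝ) * (d - 1) / (2 * π)) := by
        rw [← sqrt_mul (by linarith)]
        ring_nf

theorem energyWeight_le (hd : 1 ≤ d) (ht : t ∈ Icc (-√(d : ℝ)) √(d : ℝ)) :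
    energyWeight d t ≤ exp (1 / 2 - t ^ 2 / 2) := by
  have hd' : (1 : ℝ) ≤ d := by exact_mod_cast hd
  have htd : t ^ 2 ≤ d := by
    have := one_sub_sq_div_nonneg ht
    rwa [sub_nonneg, div_le_one (by linarith)] at this
  calc energyWeight d t ≤ exp (-(t ^ 2 / d)) ^ (((d : ℝ) - 1) / 2) :=
        rpow_le_rpow (one_sub_sq_div_nonneg ht) (by linarith [add_one_le_exp (-(t ^ 2 / d))])
          (by linarith)
    _ = exp (t ^ 2 / (2 * d) - t ^ 2 / 2) := by
        rw [← exp_mul]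
        congr 1
        field_simp
        ring
    _ ≤ exp (1 / 2 - t ^ 2 / 2) := by
        refine exp_le_exp.mpr (sub_le_sub_right ?_ _)
        rw [div_le_iff₀ (by linarith)]
        linarith

theorem const_mul_energyWeight_le (hd : 2 ≤ d) (ht : t ∈ Icc (-√(d : ℝ)) √(d : ℝ)) :
    const d * energyWeight d t ≤ 2 * √((d : ℝ) * (d - 1)) * gaussianPDFReal 0 1 t := by
  have hexp : exp (1 / 2) ≤ 2 := by
    rw [exp_half, sqrt_le_iff]
    constructor <;> linarith [exp_one_lt_d9]
  have hpdf : gaussianPDFReal 0 1 t = (√(2 * π))⁻¹ * exp (-(t ^ 2 / 2)) := by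
    simp [gaussianPDFReal, neg_div]
  calc const d * energyWeight d t ≤ √((d : ℝ) * (d - 1) / (2 * π)) * exp (1 / 2 - t ^ 2 / 2) :=
        mul_le_mul (const_le_sqrt hd) (energyWeight_le (by omega) ht)
          (rpow_nonneg (one_sub_sq_div_nonneg ht) _) (sqrt_nonneg _)
    _ = √((d : ℝ) * (d - 1)) * exp (1 / 2) * gaussianPDFReal 0 1 t := by
        rw [hpdf, sqrt_div' _ (by positivity), exp_sub, exp_neg]
        ring
    _ ≤ 2 * √((d : ℝ) * (d - 1)) * gaussianPDFReal 0 1 t := by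
        rw [mul_comm 2]
        gcongr
        exact gaussianPDFReal_nonneg 0 1 t

theorem const_mul_integral_le (hd : 2 ≤ d) (p : ℝ[X]) :
    const d * ∫ t in -√(d : ℝ)..√(d : ℝ), p.eval t ^ 2 * energyWeight d t
      ≤ 2 * √((d : ℝ) * (d - 1)) * ∫ t, p.eval t ^ 2 ∂gaussianReal 0 1 := by
  rw [← intervalIntegral.integral_const_mul]
  simp only [mul_left_comm (const d)]
  exact intervalIntegral_mul_le_integral_gaussianReal (neg_le_self (sqrt_nonneg _))
    (by positivity) (by fun_prop) (fun t => sq_nonneg _)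
    ((p ^ 2).integrable_eval_gaussianReal 0 1 |>.congr (by simp))
    (continuous_const.mul (continuous_energyWeight (by omega)))
    fun t ht => const_mul_energyWeight_le hd ht

end Gegenbauer

namespace IsGegenbauer

open Gegenbauer

variable {d : ℕ} {P : ℕ → ℝ[X]}

-- For `d = 2` the density blows up at `±√d`; integrability comes from `∫ P₀² ξ = 1`, since the
-- integral of a non-integrable function is `0`.
theorem intervalIntegrable_xiDensity (hP : IsGegenbauer d P) :
    IntervalIntegrable (xiDensity d) volume (-√(d : ℝ)) √(d : ℝ) := by
  by_contra h
  have h00 := hP.2.1 0 0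
  rw [eq_C_of_natDegree_eq_zero (hP.1 0)] at h00
  simp [intervalIntegral.integral_const_mul, intervalIntegral.integral_undef h] at h00

theorem ne_zero (hP : IsGegenbauer d P) (l : ℕ) : P l ≠ 0 := by
  intro h
  simpa [h] using hP.2.1 l l

def toSequence (hP : IsGegenbauer d P) : Sequence ℝ where
  elems' := P
  degree_eq' l := by rw [degree_eq_natDegree (hP.ne_zero l), hP.1 l]

theorem diffOp_eq_smul (hd : 2 ≤ d) (hP : IsGegenbauer d P) (l : ℕ) :
    diffOp d (P l) = (-(l * (l + d - 2) : ℝ)) • P l :=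
  hP.toSequence.apply_eq_smul_of_isAdjointPair hP.2.1
    (isAdjointPair_diffOp hd hP.intervalIntegrable_xiDensity)
    (fun l => degree_diffOp_sub_smul_lt d (hP.1 l).le) l

theorem sum_sq_mul_eq_const_mul_integral (hd : 2 ≤ d) (hP : IsGegenbauer d P) (c : ℕ → ℝ)
    (m : ℕ) :
    ∑ l ∈ range m, c l ^ 2 * l * (l + d - 2)
      = const d * ∫ t in -√(d : ℝ)..√(d : ℝ),
          (derivative (∑ l ∈ range m, c l • P l)).eval t ^ 2 * energyWeight d t := by
  have h := hP.toSequence.bilin_apply_sum_smul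
    (B := weightedInner (xiDensity d) _ _ hP.intervalIntegrable_xiDensity) hP.2.1
    (hP.diffOp_eq_smul hd) c m
  rw [weightedInner_apply, integral_diffOp_mul_xiDensity hd hP.intervalIntegrable_xiDensity] at h
  simp only [neg_mul, sum_neg_distrib, neg_inj, ← sq] at h
  exact (sum_congr rfl fun l _ => by ring).trans h.symm

end IsGegenbauer

/-- for a polynomial `φ = ∑_{l≤k} φ̂_l P_l`,
`∑_l φ̂_l² l(l+d−2) = (Γ(d/2)/Γ((d−1)/2)) √(d/π) ∫ φ'(t)² (1−t²/d)^{(d−1)/2} dt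
  ≤ 2√(d(d−1)) E[φ'(N(0,1))²]`. -/
theorem gegenbauer_energy_identity (d k : ℕ) (hd : 2 ≤ d)
    (P : ℕ → Polynomial ℝ) (hP : IsGegenbauer d P)
    (φ : Polynomial ℝ) (φc : ℕ → ℝ)
    (hφ : φ = ∑ l ∈ Finset.range (k + 1), Polynomial.C (φc l) * P l) :
    (∑ l ∈ Finset.range (k + 1), φc l ^ 2 * (l : ℝ) * ((l : ℝ) + (d : ℝ) - 2))
      = (Real.Gamma ((d : ℝ) / 2) / Real.Gamma (((d : ℝ) - 1) / 2))
          * Real.sqrt ((d : ℝ) / Real.pi)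
          * ∫ t in -Real.sqrt d..Real.sqrt d,
              (φ.derivative.eval t) ^ 2 * (1 - t ^ 2 / d) ^ (((d : ℝ) - 1) / 2) ∧
    (Real.Gamma ((d : ℝ) / 2) / Real.Gamma (((d : ℝ) - 1) / 2))
        * Real.sqrt ((d : ℝ) / Real.pi)
        * (∫ t in -Real.sqrt d..Real.sqrt d,
            (φ.derivative.eval t) ^ 2 * (1 - t ^ 2 / d) ^ (((d : ℝ) - 1) / 2))
      ≤ 2 * Real.sqrt ((d : ℝ) * ((d : ℝ) - 1))
          * ∫ t, (φ.derivative.eval t) ^ 2 ∂(ProbabilityTheory.gaussianReal 0 1) := by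
  simp only [← smul_eq_C_mul] at hφ
  subst hφ
  exact ⟨hP.sum_sq_mul_eq_const_mul_integral hd φc (k + 1), Gegenbauer.const_mul_integral_le hd _⟩

end
end
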